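/- (Contraction theorem) Let uᵏ ∈ ℝⁿ × ℝᵐ, let ũᵏ be a prediction from uᵏ, and let u^{k+1} = uᵏ − M(uᵏ − ũᵏ). Then for every VI solution u* ∈ Ω*, ‖u^{k+1} − u*‖²_H ≤ ‖uᵏ − u*‖²_H − ‖uᵏ − ũᵏ‖²_G. -/

import Mathlib

/-!
The prediction step is a pair of proximal steps, so its optimality conditions say that for
every `u ∈ Ω`, `θ(u) − θ(ũ) + (u − ũ)ᵀF(ũ) ≥ (u − ũ)ᵀQ(uᵏ − ũ)`. Taking `u = u*`, adding the
variational inequality of `u*` tested at `ũ`, and using that `F` is skew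
(`(u − v)ᵀ(F u − F v) = 0`) gives `(ũ − u*)ᵀQ(uᵏ − ũ) ≥ 0`. Since `HM = Q` and
`MᵀQ + G = Q + Qᵀ`, expanding the `H`-norm of `u^{k+1} − u* = (uᵏ − u*) − M(uᵏ − ũ)` yields
`‖u^{k+1} − u*‖²_H = ‖uᵏ − u*‖²_H − ‖uᵏ − ũ‖²_G − 2(ũ − u*)ᵀQ(uᵏ − ũ)`.
-/

open Matrix

noncomputable section

/-- A primal-dual pair `(x, y) ∈ ℝⁿ × ℝᵐ`. -/
abbrev PDVec (n m : ℕ) := (Fin n → ℝ) × (Fin m → ℝ)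

/-- View a primal-dual pair as a single vector indexed by `Fin n ⊕ Fin m`. -/
def pdToVec {n m : ℕ} (u : PDVec n m) : Fin n ⊕ Fin m → ℝ := Sum.elim u.1 u.2

/-- `θ(u) = f(x) + g(y)`. -/
def pdTheta {n m : ℕ} (f : (Fin n → ℝ) → ℝ) (g : (Fin m → ℝ) → ℝ) (u : PDVec n m) : ℝ :=
  f u.1 + g u.2

/-- `F(u) = (−Aᵀy, Ax)`. -/
def pdF {n m : ℕ} (A : Matrix (Fin m) (Fin n) ℝ) (u : PDVec n m) : PDVec n m :=
  (-(Aᵀ.mulVec u.2), A.mulVec u.1)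

/-- `Q = [[r·Iₙ, Aᵀ], [α·A, s·Iₘ]]`. -/
def pdQ {n m : ℕ} (A : Matrix (Fin m) (Fin n) ℝ) (r s α : ℝ) :
    Matrix (Fin n ⊕ Fin m) (Fin n ⊕ Fin m) ℝ :=
  Matrix.fromBlocks (r • 1) Aᵀ (α • A) (s • 1)

/-- `M = [[Iₙ, 0], [−((1−α)/s)·A, Iₘ]]`. -/
def pdM {n m : ℕ} (A : Matrix (Fin m) (Fin n) ℝ) (s α : ℝ) :
    Matrix (Fin n ⊕ Fin m) (Fin n ⊕ Fin m) ℝ :=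
  Matrix.fromBlocks 1 0 (-(((1 - α) / s) • A)) 1

/-- `H = [[r·Iₙ + ((1−α)/s)·AᵀA, Aᵀ], [A, s·Iₘ]]`. -/
def pdH {n m : ℕ} (A : Matrix (Fin m) (Fin n) ℝ) (r s α : ℝ) :
    Matrix (Fin n ⊕ Fin m) (Fin n ⊕ Fin m) ℝ :=
  Matrix.fromBlocks (r • 1 + ((1 - α) / s) • (Aᵀ * A)) Aᵀ A (s • 1)

/-- `G = [[r·Iₙ + (α(1−α)/s)·AᵀA, Aᵀ], [A, s·Iₘ]]`. -/
def pdG {n m : ℕ} (A : Matrix (Fin m) (Fin n) ℝ) (r s α : ℝ) :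
    Matrix (Fin n ⊕ Fin m) (Fin n ⊕ Fin m) ℝ :=
  Matrix.fromBlocks (r • 1 + ((α * (1 - α)) / s) • (Aᵀ * A)) Aᵀ A (s • 1)

/-- `‖v‖²_S = vᵀ S v`. -/
def pdNormSq {k : Type*} [Fintype k] (S : Matrix k k ℝ) (v : k → ℝ) : ℝ :=
  v ⬝ᵥ S.mulVec v

/-- `ut` is a prediction from `uk`: its first component minimizes
`x ↦ f(x) − (yᵏ)ᵀAx + (r/2)‖x − xᵏ‖²` over `X`, and its second component minimizes
`y ↦ g(y) + yᵀA(x̃ᵏ + α(x̃ᵏ − xᵏ)) + (s/2)‖y − yᵏ‖²` over `Y`. -/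
def IsPrediction {n m : ℕ} (X : Set (Fin n → ℝ)) (Y : Set (Fin m → ℝ))
    (f : (Fin n → ℝ) → ℝ) (g : (Fin m → ℝ) → ℝ)
    (A : Matrix (Fin m) (Fin n) ℝ) (r s α : ℝ) (uk ut : PDVec n m) : Prop :=
  ut.1 ∈ X ∧
  (∀ x ∈ X,
      f ut.1 - uk.2 ⬝ᵥ A.mulVec ut.1 + r / 2 * ((ut.1 - uk.1) ⬝ᵥ (ut.1 - uk.1)) ≤
        f x - uk.2 ⬝ᵥ A.mulVec x + r / 2 * ((x - uk.1) ⬝ᵥ (x - uk.1))) ∧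
  ut.2 ∈ Y ∧
  (∀ y ∈ Y,
      g ut.2 + ut.2 ⬝ᵥ A.mulVec (ut.1 + α • (ut.1 - uk.1)) +
          s / 2 * ((ut.2 - uk.2) ⬝ᵥ (ut.2 - uk.2)) ≤
        g y + y ⬝ᵥ A.mulVec (ut.1 + α • (ut.1 - uk.1)) +
          s / 2 * ((y - uk.2) ⬝ᵥ (y - uk.2)))

/-- The solution set `Ω*` of the variational inequality `VI(Ω, F, θ)`. -/
def VISol {n m : ℕ} (X : Set (Fin n → ℝ)) (Y : Set (Fin m → ℝ))
    (f : (Fin n → ℝ) → ℝ) (g : (Fin m → ℝ) → ℝ)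
    (A : Matrix (Fin m) (Fin n) ℝ) : Set (PDVec n m) :=
  {u | u.1 ∈ X ∧ u.2 ∈ Y ∧
    ∀ v : PDVec n m, v.1 ∈ X → v.2 ∈ Y →
      pdTheta f g v - pdTheta f g u + (pdToVec v - pdToVec u) ⬝ᵥ pdToVec (pdF A u) ≥ 0}

open Filter Topology in
lemma nonneg_of_forall_nonneg_add_mul {a C : ℝ}
    (h : ∀ t : ℝ, 0 < t → t ≤ 1 → 0 ≤ a + t * C) : 0 ≤ a := by
  have hlim : Tendsto (fun t : ℝ => a + t * C) (𝓝[>] 0) (𝓝 a) := by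
    have : Tendsto (fun t : ℝ => a + t * C) (𝓝 0) (𝓝 (a + 0 * C)) :=
      (continuous_const.add (continuous_id.mul continuous_const)).tendsto 0
    simpa using this.mono_left nhdsWithin_le_nhds
  refine ge_of_tendsto hlim ?_
  filter_upwards [Ioc_mem_nhdsGT one_pos] with t ht using h t ht.1 ht.2

lemma dotProduct_self_add_smul {ι : Type*} [Fintype ι] (u d : ι → ℝ) (t : ℝ) :
    (u + t • d) ⬝ᵥ (u + t • d) = u ⬝ᵥ u + 2 * t * (d ⬝ᵥ u) + t ^ 2 * (d ⬝ᵥ d) := by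
  simp only [dotProduct_add, add_dotProduct, dotProduct_smul, smul_dotProduct, smul_eq_mul,
    dotProduct_comm u d]
  ring

/-- Compare `x'` with the points `x' + t • (x - x')` of the segment, divide by `t` and let
`t → 0`. -/
theorem ConvexOn.nonneg_of_isMinOn_add_sq {ι : Type*} [Fintype ι] {X : Set (ι → ℝ)}
    {φ : (ι → ℝ) → ℝ} (hφ : ConvexOn ℝ X φ) (ρ : ℝ) (x₀ : ι → ℝ) {x' : ι → ℝ} (hx' : x' ∈ X)
    (hmin : IsMinOn (fun x => φ x + ρ / 2 * ((x - x₀) ⬝ᵥ (x - x₀))) X x')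
    {x : ι → ℝ} (hx : x ∈ X) :
    0 ≤ φ x - φ x' + ρ * ((x - x') ⬝ᵥ (x' - x₀)) := by
  refine nonneg_of_forall_nonneg_add_mul (C := ρ / 2 * ((x - x') ⬝ᵥ (x - x')))
    fun t ht0 ht1 => ?_
  have hseg : x' + t • (x - x') = (1 - t) • x' + t • x := by
    rw [smul_sub, sub_smul, one_smul]; abel
  have hmem : x' + t • (x - x') ∈ X := hφ.1.add_smul_sub_mem hx' hx ⟨ht0.le, ht1⟩
  have hconv : φ (x' + t • (x - x')) ≤ (1 - t) * φ x' + t * φ x := by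
    rw [hseg]; exact hφ.2 hx' hx (by linarith) ht0.le (by ring)
  have hle := isMinOn_iff.mp hmin _ hmem
  have hsq : x' + t • (x - x') - x₀ = (x' - x₀) + t • (x - x') := by abel
  simp only [hsq, dotProduct_self_add_smul] at hle
  refine nonneg_of_mul_nonneg_right ?_ ht0
  nlinarith

lemma pdNormSq_sub_mulVec {k : Type*} [Fintype k] {H M Q G : Matrix k k ℝ} (hH : Hᵀ = H)
    (hHM : H * M = Q) (hMQ : Mᵀ * Q + G = Q + Qᵀ) (w d : k → ℝ) :
    pdNormSq H (w - M *ᵥ d) = pdNormSq H w - pdNormSq G d - 2 * ((w - d) ⬝ᵥ Q *ᵥ d) := by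
  have hcross : (M *ᵥ d) ⬝ᵥ H *ᵥ w = w ⬝ᵥ Q *ᵥ d := by
    rw [← hH, dotProduct_transpose_mulVec, mulVec_mulVec, hHM]
  have hHMd : H *ᵥ (M *ᵥ d) = Q *ᵥ d := by rw [mulVec_mulVec, hHM]
  have hquad : (M *ᵥ d) ⬝ᵥ Q *ᵥ d = 2 * (d ⬝ᵥ Q *ᵥ d) - d ⬝ᵥ G *ᵥ d := by
    have h := congrArg (fun S => d ⬝ᵥ S *ᵥ d) hMQ
    simp only [add_mulVec, dotProduct_add, ← mulVec_mulVec, dotProduct_transpose_mulVec] at h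
    rw [dotProduct_comm]
    linarith
  simp only [pdNormSq, mulVec_sub, dotProduct_sub, sub_dotProduct, hcross, hHMd, hquad]
  ring

section PrimalDual

variable {n m : ℕ}

lemma pdToVec_sub (u v : PDVec n m) : pdToVec (u - v) = pdToVec u - pdToVec v := by
  ext (i | i) <;> rfl

lemma pdToVec_dotProduct (u v : PDVec n m) :
    pdToVec u ⬝ᵥ pdToVec v = u.1 ⬝ᵥ v.1 + u.2 ⬝ᵥ v.2 :=
  sumElim_dotProduct_sumElim _ _ _ _

lemma pdQ_mulVec (A : Matrix (Fin m) (Fin n) ℝ) (r s α : ℝ) (u : PDVec n m) :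
    pdQ A r s α *ᵥ pdToVec u = pdToVec (r • u.1 + Aᵀ *ᵥ u.2, α • (A *ᵥ u.1) + s • u.2) := by
  simp [pdQ, pdToVec, fromBlocks_mulVec, smul_mulVec]

lemma pdF_sub (A : Matrix (Fin m) (Fin n) ℝ) (u v : PDVec n m) :
    pdF A (u - v) = pdF A u - pdF A v := by
  simp only [pdF, Prod.fst_sub, Prod.snd_sub, mulVec_sub, Prod.mk_sub_mk]
  abel_nf

lemma pdToVec_dotProduct_pdF_self (A : Matrix (Fin m) (Fin n) ℝ) (u : PDVec n m) :
    pdToVec u ⬝ᵥ pdToVec (pdF A u) = 0 := by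
  rw [pdToVec_dotProduct, pdF, dotProduct_neg, dotProduct_transpose_mulVec, neg_add_cancel]

lemma dotProduct_pdF_eq (A : Matrix (Fin m) (Fin n) ℝ) (u v : PDVec n m) :
    (pdToVec u - pdToVec v) ⬝ᵥ pdToVec (pdF A u) =
      (pdToVec u - pdToVec v) ⬝ᵥ pdToVec (pdF A v) := by
  rw [← sub_eq_zero, ← dotProduct_sub, ← pdToVec_sub, ← pdToVec_sub, ← pdF_sub,
    pdToVec_dotProduct_pdF_self]

lemma pdH_transpose (A : Matrix (Fin m) (Fin n) ℝ) (r s α : ℝ) :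
    (pdH A r s α)ᵀ = pdH A r s α := by
  simp [pdH, fromBlocks_transpose, transpose_add, transpose_smul, Matrix.transpose_mul]

lemma pdH_mul_pdM (A : Matrix (Fin m) (Fin n) ℝ) (r : ℝ) {s : ℝ} (α : ℝ) (hs : s ≠ 0) :
    pdH A r s α * pdM A s α = pdQ A r s α := by
  rw [pdH, pdM, pdQ, fromBlocks_multiply]
  congr 1
  · rw [Matrix.mul_one, Matrix.mul_neg, Matrix.mul_smul]; abel
  · simp
  · ext i j
    simp only [Matrix.add_apply, Matrix.neg_apply, Matrix.smul_apply, smul_eq_mul,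
      Matrix.mul_one, Matrix.mul_neg, Matrix.smul_mul, Matrix.one_mul]
    field_simp
    ring
  · simp

lemma pdM_transpose_mul_pdQ_add_pdG (A : Matrix (Fin m) (Fin n) ℝ) (r : ℝ) {s : ℝ} (α : ℝ)
    (hs : s ≠ 0) :
    (pdM A s α)ᵀ * pdQ A r s α + pdG A r s α = pdQ A r s α + (pdQ A r s α)ᵀ := by
  rw [pdM, pdQ, pdG, fromBlocks_transpose, fromBlocks_transpose, fromBlocks_multiply,
    fromBlocks_add, fromBlocks_add]
  simp only [transpose_one, transpose_zero, transpose_neg, transpose_smul, transpose_transpose,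
    Matrix.one_mul, Matrix.mul_one, Matrix.zero_mul, zero_add,
    Matrix.neg_mul, Matrix.smul_mul, Matrix.mul_smul, smul_zero]
  congr 1
  · ext i j
    simp only [Matrix.add_apply, Matrix.neg_apply, Matrix.smul_apply, smul_eq_mul]
    field_simp
    ring
  · ext i j
    simp only [Matrix.add_apply, Matrix.neg_apply, Matrix.smul_apply, smul_eq_mul,
      Matrix.transpose_apply]
    field_simp
    ring

end PrimalDual

section Prediction

variable {n m : ℕ} {X : Set (Fin n → ℝ)} {Y : Set (Fin m → ℝ)} {f : (Fin n → ℝ) → ℝ}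
  {g : (Fin m → ℝ) → ℝ} {A : Matrix (Fin m) (Fin n) ℝ} {r s α : ℝ} {uk ut : PDVec n m}

lemma IsPrediction.primal_le (hpred : IsPrediction X Y f g A r s α uk ut)
    (hf : ConvexOn ℝ X f) {x : Fin n → ℝ} (hx : x ∈ X) :
    (x - ut.1) ⬝ᵥ (r • (uk.1 - ut.1) + Aᵀ *ᵥ (uk.2 - ut.2)) ≤
      f x - f ut.1 + (x - ut.1) ⬝ᵥ -(Aᵀ *ᵥ ut.2) := by
  have hφ : ConvexOn ℝ X (fun x => f x - uk.2 ⬝ᵥ A *ᵥ x) :=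
    hf.sub (LinearMap.concaveOn (dotProductBilin ℝ ℝ uk.2 ∘ₗ A.mulVecLin) hf.1)
  have h := hφ.nonneg_of_isMinOn_add_sq r uk.1 hpred.1 (isMinOn_iff.mpr hpred.2.1) hx
  simp only [dotProduct_transpose_mulVec, mulVec_sub, dotProduct_sub, sub_dotProduct,
    dotProduct_add, dotProduct_smul, dotProduct_neg, smul_eq_mul] at h ⊢
  linarith

lemma IsPrediction.dual_le (hpred : IsPrediction X Y f g A r s α uk ut)
    (hg : ConvexOn ℝ Y g) {y : Fin m → ℝ} (hy : y ∈ Y) :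
    (y - ut.2) ⬝ᵥ (α • (A *ᵥ (uk.1 - ut.1)) + s • (uk.2 - ut.2)) ≤
      g y - g ut.2 + (y - ut.2) ⬝ᵥ A *ᵥ ut.1 := by
  have hφ : ConvexOn ℝ Y (fun y => g y + y ⬝ᵥ A *ᵥ (ut.1 + α • (ut.1 - uk.1))) :=
    hg.add <| LinearMap.convexOn
      ((dotProductBilin ℝ ℝ).flip (A *ᵥ (ut.1 + α • (ut.1 - uk.1)))) hg.1
  have h := hφ.nonneg_of_isMinOn_add_sq s uk.2 hpred.2.2.1 (isMinOn_iff.mpr hpred.2.2.2) hy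
  simp only [mulVec_add, mulVec_sub, mulVec_smul, dotProduct_sub, sub_dotProduct,
    dotProduct_add, dotProduct_smul, smul_eq_mul] at h ⊢
  linarith

lemma IsPrediction.dotProduct_pdQ_le (hpred : IsPrediction X Y f g A r s α uk ut)
    (hf : ConvexOn ℝ X f) (hg : ConvexOn ℝ Y g) {v : PDVec n m} (hvX : v.1 ∈ X)
    (hvY : v.2 ∈ Y) :
    (pdToVec v - pdToVec ut) ⬝ᵥ pdQ A r s α *ᵥ (pdToVec uk - pdToVec ut) ≤
      pdTheta f g v - pdTheta f g ut + (pdToVec v - pdToVec ut) ⬝ᵥ pdToVec (pdF A ut) := by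
  rw [← pdToVec_sub, ← pdToVec_sub, pdQ_mulVec, pdToVec_dotProduct, pdToVec_dotProduct, pdF,
    pdTheta, pdTheta]
  simp only [Prod.fst_sub, Prod.snd_sub]
  linarith [hpred.primal_le hf hvX, hpred.dual_le hg hvY]

theorem IsPrediction.dotProduct_pdQ_nonneg (hpred : IsPrediction X Y f g A r s α uk ut)
    (hf : ConvexOn ℝ X f) (hg : ConvexOn ℝ Y g) {us : PDVec n m} (hus : us ∈ VISol X Y f g A) :
    0 ≤ (pdToVec ut - pdToVec us) ⬝ᵥ pdQ A r s α *ᵥ (pdToVec uk - pdToVec ut) := by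
  obtain ⟨husX, husY, hVI⟩ := hus
  have hpred_us := hpred.dotProduct_pdQ_le hf hg husX husY
  have hVI_ut := hVI ut hpred.1 hpred.2.2.1
  rw [← neg_sub, neg_dotProduct, neg_dotProduct] at hpred_us
  linarith [dotProduct_pdF_eq A ut us]

end Prediction

theorem stmt_8_general (n m : ℕ)
    (X : Set (Fin n → ℝ)) (Y : Set (Fin m → ℝ))
    (hXcv : Convex ℝ X)
    (hYcv : Convex ℝ Y)
    (f : (Fin n → ℝ) → ℝ) (g : (Fin m → ℝ) → ℝ)
    (hf : ConvexOn ℝ Set.univ f) (hg : ConvexOn ℝ Set.univ g)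
    (A : Matrix (Fin m) (Fin n) ℝ) (r s α : ℝ) (hs : 0 < s)
    (uk ut uk1 : PDVec n m)
    (hpred : IsPrediction X Y f g A r s α uk ut)
    (hcorr : pdToVec uk1 = pdToVec uk - (pdM A s α).mulVec (pdToVec uk - pdToVec ut)) :
    ∀ ustar ∈ VISol X Y f g A,
      pdNormSq (pdH A r s α) (pdToVec uk1 - pdToVec ustar) ≤
        pdNormSq (pdH A r s α) (pdToVec uk - pdToVec ustar) -
          pdNormSq (pdG A r s α) (pdToVec uk - pdToVec ut) := by
  intro ustar hustar
  have hkey := hpred.dotProduct_pdQ_nonneg (hf.subset (Set.subset_univ X) hXcv)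
    (hg.subset (Set.subset_univ Y) hYcv) hustar
  have hstep : pdToVec uk1 - pdToVec ustar =
      (pdToVec uk - pdToVec ustar) - pdM A s α *ᵥ (pdToVec uk - pdToVec ut) := by
    rw [hcorr]; abel
  have hdiff : (pdToVec uk - pdToVec ustar) - (pdToVec uk - pdToVec ut) =
      pdToVec ut - pdToVec ustar := by abel
  rw [hstep, pdNormSq_sub_mulVec (pdH_transpose A r s α) (pdH_mul_pdM A r α hs.ne')
    (pdM_transpose_mul_pdQ_add_pdG A r α hs.ne'), hdiff]
  linarith

/-- Contraction theorem (3.16). -/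
theorem stmt_8 (n m : ℕ) (hn : 0 < n) (hm : 0 < m)
    (X : Set (Fin n → ℝ)) (Y : Set (Fin m → ℝ))
    (hXne : X.Nonempty) (hXcl : IsClosed X) (hXcv : Convex ℝ X)
    (hYne : Y.Nonempty) (hYcl : IsClosed Y) (hYcv : Convex ℝ Y)
    (f : (Fin n → ℝ) → ℝ) (g : (Fin m → ℝ) → ℝ)
    (hf : ConvexOn ℝ Set.univ f) (hg : ConvexOn ℝ Set.univ g)
    (A : Matrix (Fin m) (Fin n) ℝ) (r s α : ℝ) (hr : 0 < r) (hs : 0 < s)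
    (uk ut uk1 : PDVec n m)
    (hpred : IsPrediction X Y f g A r s α uk ut)
    (hcorr : pdToVec uk1 = pdToVec uk - (pdM A s α).mulVec (pdToVec uk - pdToVec ut)) :
    ∀ ustar ∈ VISol X Y f g A,
      pdNormSq (pdH A r s α) (pdToVec uk1 - pdToVec ustar) ≤
        pdNormSq (pdH A r s α) (pdToVec uk - pdToVec ustar) -
          pdNormSq (pdG A r s α) (pdToVec uk - pdToVec ut) :=
  stmt_8_general n m X Y hXcv hYcv f g hf hg A r s α hs uk ut uk1 hpred hcorr
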